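/- arXiv:2504.13542 — 7 statements merged into one kernel-verified Lean document; each statement's English description precedes it below -/
import Mathlib

section
/- Let F be the inverse of the n×n real tridiagonal matrix with diagonal entries 1 and off-diagonal entries -1/2 (which is invertible). Then for all 1 ≤ i ≤ j ≤ n, the (i,j) entry of F equals 2 i (n−j+1)/(n+1). -/
open Finset

lemma sum_three (N a : ℕ) (h : a + 2 < N) (g : ℕ → ℝ)
    (hg : ∀ m, m ≠ a → m ≠ a + 1 → m ≠ a + 2 → g m = 0) :
    ∑ m ∈ Finset.range N, g m = g a + g (a + 1) + g (a + 2) := by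
  have hsub : ({a, a + 1, a + 2} : Finset ℕ) ⊆ Finset.range N := by
    intro x hx; simp only [mem_insert, mem_singleton] at hx
    simp only [mem_range]; omega
  rw [← Finset.sum_subset hsub]
  · rw [Finset.sum_insert (by simp), Finset.sum_insert (by simp), Finset.sum_singleton]
    ring
  · intro x _ hx
    simp only [mem_insert, mem_singleton, not_or] at hx
    exact hg x hx.1 hx.2.1 hx.2.2

/-- The inverse of the n×n tridiagonal matrix with 1 on the diagonal and -1/2 off-diagonal
exists, and its (i,j) entry for i ≤ j is 2 i (n−j+1)/(n+1) (1-based indexing;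
here 0-based: 2 (i+1) (n−j) / (n+1)). -/
theorem stmt2 (n : ℕ) :
    let M : Matrix (Fin n) (Fin n) ℝ := Matrix.of fun i j =>
      if i = j then 1
      else if (i : ℕ) + 1 = (j : ℕ) ∨ (j : ℕ) + 1 = (i : ℕ) then -(1/2) else 0
    IsUnit M ∧ ∀ i j : Fin n, i ≤ j →
      M⁻¹ i j = 2 * ((i : ℝ) + 1) * ((n : ℝ) - (j : ℝ)) / ((n : ℝ) + 1) := by
  intro M
  have hn1 : (n : ℝ) + 1 ≠ 0 := by positivity
  set F : Matrix (Fin n) (Fin n) ℝ := Matrix.of fun i j =>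
    2 * (((min (i : ℕ) (j : ℕ) : ℕ) : ℝ) + 1) * ((n : ℝ) - ((max (i : ℕ) (j : ℕ) : ℕ) : ℝ))
      / ((n : ℝ) + 1) with hFdef
  have key : M * F = 1 := by
    ext i k
    rw [Matrix.mul_apply]
    set g : ℕ → ℝ := fun m =>
      (if (i : ℕ) = m then (1 : ℝ) else if (i : ℕ) + 1 = m ∨ m + 1 = (i : ℕ) then -(1/2) else 0)
        * (2 * (((min m (k : ℕ) : ℕ) : ℝ) + 1) * ((n : ℝ) - ((max m (k : ℕ) : ℕ) : ℝ))
          / ((n : ℝ) + 1)) with hg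
    have hgval : ∀ m : ℕ, g m =
      (if (i : ℕ) = m then (1 : ℝ) else if (i : ℕ) + 1 = m ∨ m + 1 = (i : ℕ) then -(1/2) else 0)
        * (2 * (((min m (k : ℕ) : ℕ) : ℝ) + 1) * ((n : ℝ) - ((max m (k : ℕ) : ℕ) : ℝ))
          / ((n : ℝ) + 1)) := fun m => rfl
    have hsum1 : ∑ j, M i j * F j k = ∑ m ∈ Finset.range n, g m := by
      rw [← Fin.sum_univ_eq_sum_range g n]
      refine Finset.sum_congr rfl fun j _ => ?_
      simp only [hg, M, F, Matrix.of_apply, Fin.ext_iff]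
    set gx : ℕ → ℝ := fun m => match m with | 0 => 0 | t + 1 => g t with hgx
    have hgn : g n = 0 := by
      have hk : (k : ℕ) ≤ n := le_of_lt k.isLt
      rw [hgval, Nat.max_eq_left hk]
      ring
    have hsum2 : ∑ m ∈ Finset.range (n + 2), gx m = ∑ m ∈ Finset.range n, g m := by
      rw [Finset.sum_range_succ' gx (n + 1)]
      simp only [hgx]
      rw [Finset.sum_range_succ]
      rw [show (fun t => g t) = g from rfl, hgn]
      ring
    have hvanish : ∀ m, m ≠ (i : ℕ) → m ≠ (i : ℕ) + 1 → m ≠ (i : ℕ) + 2 → gx m = 0 := by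
      intro m h1 h2 h3
      match m with
      | 0 => rfl
      | t + 1 =>
        show g t = 0
        rw [hgval, if_neg (by omega), if_neg (by omega)]
        ring
    have hthree := sum_three (n + 2) (i : ℕ) (by omega) gx hvanish
    rw [hsum1, ← hsum2, hthree]
    have hgx2 : gx ((i : ℕ) + 1) = g (i : ℕ) := rfl
    have hgx3 : gx ((i : ℕ) + 2) = g ((i : ℕ) + 1) := rfl
    rw [hgx2, hgx3]
    have hk : (k : ℕ) < n := k.isLt
    have hi : (i : ℕ) < n := i.isLt
    rw [Matrix.one_apply]
    rcases Nat.eq_zero_or_pos (i : ℕ) with h0 | hpos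
    · -- i = 0
      have hx0 : gx (i : ℕ) = 0 := by rw [h0]
      rw [hx0, hgval (i : ℕ), hgval ((i : ℕ) + 1)]
      rw [if_pos rfl, if_neg (by omega : ¬((i : ℕ) = (i : ℕ) + 1)), if_pos (Or.inl rfl)]
      rcases eq_or_lt_of_le (by omega : (i : ℕ) ≤ (k : ℕ)) with heq | hlt
      · rw [if_pos (Fin.ext heq)]
        rw [min_eq_left (le_of_eq heq), max_eq_right (le_of_eq heq),
          min_eq_right (by omega : (k : ℕ) ≤ (i : ℕ) + 1),
          max_eq_left (by omega : (k : ℕ) ≤ (i : ℕ) + 1)]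
        have e1 : ((i : ℕ) : ℝ) = 0 := by exact_mod_cast h0
        have e2 : ((k : ℕ) : ℝ) = 0 := by exact_mod_cast heq ▸ h0
        push_cast
        rw [e1, e2]
        field_simp
        ring
      · have hne : i ≠ k := Fin.ne_of_val_ne (by omega)
        rw [if_neg hne]
        rw [min_eq_left (by omega : (i : ℕ) ≤ (k : ℕ)),
          max_eq_right (by omega : (i : ℕ) ≤ (k : ℕ)),
          min_eq_left (by omega : (i : ℕ) + 1 ≤ (k : ℕ)),
          max_eq_right (by omega : (i : ℕ) + 1 ≤ (k : ℕ))]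
        have e1 : ((i : ℕ) : ℝ) = 0 := by exact_mod_cast h0
        push_cast
        rw [e1]
        ring
    · -- i ≥ 1
      obtain ⟨t, ht⟩ : ∃ t, (i : ℕ) = t + 1 := ⟨(i : ℕ) - 1, by omega⟩
      have hx1 : gx (i : ℕ) = g t := by rw [ht]
      rw [hx1, hgval t, hgval (i : ℕ), hgval ((i : ℕ) + 1)]
      rw [if_neg (by omega : ¬((i : ℕ) = t)), if_pos (Or.inr (by omega : t + 1 = (i : ℕ)))]
      rw [if_pos rfl]
      rw [if_neg (by omega : ¬((i : ℕ) = (i : ℕ) + 1)), if_pos (Or.inl rfl)]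
      have er : ((i : ℕ) : ℝ) = (t : ℝ) + 1 := by exact_mod_cast ht
      rcases lt_trichotomy (k : ℕ) (i : ℕ) with hlt | heq | hgt
      · have hne : i ≠ k := Fin.ne_of_val_ne (by omega)
        rw [if_neg hne]
        rw [min_eq_right (by omega : (k : ℕ) ≤ t), max_eq_left (by omega : (k : ℕ) ≤ t),
          min_eq_right (by omega : (k : ℕ) ≤ (i : ℕ)),
          max_eq_left (by omega : (k : ℕ) ≤ (i : ℕ)),
          min_eq_right (by omega : (k : ℕ) ≤ (i : ℕ) + 1),
          max_eq_left (by omega : (k : ℕ) ≤ (i : ℕ) + 1)]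
        push_cast
        rw [er]
        ring
      · have hik : i = k := Fin.ext heq.symm
        rw [if_pos hik]
        have ek : ((k : ℕ) : ℝ) = (t : ℝ) + 1 := by exact_mod_cast heq.trans ht
        rw [min_eq_left (by omega : t ≤ (k : ℕ)), max_eq_right (by omega : t ≤ (k : ℕ)),
          min_eq_left (by omega : (i : ℕ) ≤ (k : ℕ)),
          max_eq_right (by omega : (i : ℕ) ≤ (k : ℕ)),
          min_eq_right (by omega : (k : ℕ) ≤ (i : ℕ) + 1),
          max_eq_left (by omega : (k : ℕ) ≤ (i : ℕ) + 1)]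
        push_cast
        rw [er, ek]
        field_simp
        ring
      · have hne : i ≠ k := Fin.ne_of_val_ne (by omega)
        rw [if_neg hne]
        rw [min_eq_left (by omega : t ≤ (k : ℕ)), max_eq_right (by omega : t ≤ (k : ℕ)),
          min_eq_left (by omega : (i : ℕ) ≤ (k : ℕ)),
          max_eq_right (by omega : (i : ℕ) ≤ (k : ℕ)),
          min_eq_left (by omega : (i : ℕ) + 1 ≤ (k : ℕ)),
          max_eq_right (by omega : (i : ℕ) + 1 ≤ (k : ℕ))]
        push_cast
        rw [er]
        ring
  have hdet : IsUnit M.det := Matrix.isUnit_det_of_right_inverse key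
  have hinv : M⁻¹ = F := Matrix.inv_eq_right_inv key
  refine ⟨(Matrix.isUnit_iff_isUnit_det M).mpr hdet, fun i j hij => ?_⟩
  rw [hinv]
  have hij' : (i : ℕ) ≤ (j : ℕ) := hij
  show 2 * (((min (i : ℕ) (j : ℕ) : ℕ) : ℝ) + 1) * ((n : ℝ) - ((max (i : ℕ) (j : ℕ) : ℕ) : ℝ))
      / ((n : ℝ) + 1) = _
  rw [min_eq_left hij', max_eq_right hij']
end

section
/- For the walk model with steps {(−1,1),(1,1),(1,−1)} in the quarter plane, for every (i,j) ∈ ℕ², the sum over n of (number of walks of length n from (0,0) to (i,j))/2^n converges and is a rational number. -/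
/-- Number of walks of length n from p to q with steps in S, staying in the quarter
plane ℕ² at every point. -/
def qwalks (S : Finset (ℤ × ℤ)) : ℕ → ℤ × ℤ → ℤ × ℤ → ℕ
  | 0, p, q => if p = q then 1 else 0
  | n+1, p, q => ∑ s ∈ S, if 0 ≤ (p + s).1 ∧ 0 ≤ (p + s).2 then qwalks S n (p + s) q else 0

def stepsA : Finset (ℤ × ℤ) := {(-1, 1), (1, 1), (1, -1)}

lemma sum_stepsA {M : Type*} [AddCommMonoid M] (f : ℤ × ℤ → M) :
    ∑ s ∈ stepsA, f s = f (-1,1) + f (1,1) + f (1,-1) := by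
  simp only [stepsA]
  rw [Finset.sum_insert (by decide), Finset.sum_pair (by decide), add_assoc]

lemma qwalks_zero (q : ℤ × ℤ) : ∀ n (p : ℤ × ℤ),
    (∀ k : ℕ, q.1 + q.2 ≠ p.1 + p.2 + 2 * k) → qwalks stepsA n p q = 0
  | 0, p, h => by
    simp only [qwalks]
    rw [if_neg]; rintro rfl; exact h 0 (by ring)
  | n+1, p, h => by
    have h1 : qwalks stepsA n (p + (-1,1)) q = 0 :=
      qwalks_zero q n _ (fun k hk => h k (by
        simp only [Prod.fst_add, Prod.snd_add] at hk; push_cast at hk ⊢; linarith))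
    have h2 : qwalks stepsA n (p + (1,1)) q = 0 :=
      qwalks_zero q n _ (fun k hk => h (k+1) (by
        simp only [Prod.fst_add, Prod.snd_add] at hk; push_cast at hk ⊢; linarith))
    have h3 : qwalks stepsA n (p + (1,-1)) q = 0 :=
      qwalks_zero q n _ (fun k hk => h k (by
        simp only [Prod.fst_add, Prod.snd_add] at hk; push_cast at hk ⊢; linarith))
    simp only [qwalks]
    rw [sum_stepsA (f := fun s => if 0 ≤ (p + s).1 ∧ 0 ≤ (p + s).2 then qwalks stepsA n (p + s) q else 0)]
    have h2' : qwalks stepsA n (p + 1) q = 0 := h2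
    simp [h1, h2, h2', h3]

noncomputable def eps (K : ℕ) : ℝ := 1 / ((K:ℝ)+1)^2
noncomputable def lam (K : ℕ) : ℝ := 2 - 1/((K:ℝ)+1)^2
noncomputable def vfun (K : ℕ) (p : ℤ × ℤ) : ℝ :=
  eps K ^ (p.1 + p.2) * ((p.1:ℝ)+1) * ((p.2:ℝ)+1)

lemma eps_pos (K : ℕ) : 0 < eps K := by
  have : (0:ℝ) < ((K:ℝ)+1)^2 := by positivity
  exact div_pos one_pos this

lemma one_le_lam (K : ℕ) : 1 ≤ lam K := by
  have h1 : (1:ℝ) ≤ ((K:ℝ)+1)^2 := by nlinarith [Nat.cast_nonneg (α := ℝ) K]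
  have := div_le_one_of_le₀ (le_refl (1:ℝ)) (by norm_num)
  unfold lam
  have : 1/((K:ℝ)+1)^2 ≤ 1 := by
    rw [div_le_one (by positivity)]; exact h1
  linarith

lemma lam_lt_two (K : ℕ) : lam K < 2 := by
  unfold lam
  have : 0 < 1/((K:ℝ)+1)^2 := by positivity
  linarith

lemma vfun_nonneg (K : ℕ) {p : ℤ × ℤ} (h1 : -1 ≤ p.1) (h2 : -1 ≤ p.2) : 0 ≤ vfun K p := by
  unfold vfun
  have : (0:ℝ) < eps K ^ (p.1 + p.2) := zpow_pos (eps_pos K) _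
  have c1 : (0:ℝ) ≤ (p.1:ℝ)+1 := by exact_mod_cast (by linarith : (0:ℤ) ≤ p.1 + 1)
  have c2 : (0:ℝ) ≤ (p.2:ℝ)+1 := by exact_mod_cast (by linarith : (0:ℤ) ≤ p.2 + 1)
  positivity

lemma vfun_pos (K : ℕ) {p : ℤ × ℤ} (h1 : 0 ≤ p.1) (h2 : 0 ≤ p.2) : 0 < vfun K p := by
  unfold vfun
  have : (0:ℝ) < eps K ^ (p.1 + p.2) := zpow_pos (eps_pos K) _
  have c1 : (0:ℝ) < (p.1:ℝ)+1 := by exact_mod_cast (by linarith : (0:ℤ) < p.1 + 1)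
  have c2 : (0:ℝ) < (p.2:ℝ)+1 := by exact_mod_cast (by linarith : (0:ℤ) < p.2 + 1)
  positivity

lemma lam_eq (K : ℕ) : lam K = 2 - eps K := rfl

lemma key (K : ℕ) (x y : ℤ) (hx : 0 ≤ x) (hy : 0 ≤ y) (hxy : x + y ≤ 2*K) :
    vfun K (x-1, y+1) + vfun K (x+1, y-1) +
      (if x + y + 2 ≤ 2*K then vfun K (x+1, y+1) else 0) ≤ lam K * vfun K (x, y) := by
  have hE : (0:ℝ) < eps K ^ (x + y) := zpow_pos (eps_pos K) _
  have e1 : (x-1) + (y+1) = x + y := by ring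
  have e2 : (x+1) + (y-1) = x + y := by ring
  have e3 : eps K ^ ((x+1) + (y+1)) = eps K ^ (x+y) * eps K ^ (2:ℕ) := by
    rw [show (x+1)+(y+1) = (x+y) + (2:ℤ) by ring, zpow_add₀ (ne_of_gt (eps_pos K))]
    rw [zpow_two, pow_two]
  have hk : (0:ℝ) ≤ (K:ℝ) := Nat.cast_nonneg K
  have hc : (1:ℝ) ≤ ((K:ℝ)+1)^2 := by nlinarith
  have hxR : (0:ℝ) ≤ (x:ℝ) := by exact_mod_cast hx
  have hyR : (0:ℝ) ≤ (y:ℝ) := by exact_mod_cast hy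
  have hxyR : (x:ℝ) + y ≤ 2*K := by exact_mod_cast hxy
  have heps : eps K * ((K:ℝ)+1)^2 = 1 := by
    unfold eps; field_simp
  rcases le_or_gt (x + y + 2) (2*K) with hup | hup
  · rw [if_pos hup]
    have hupR : (x:ℝ) + y + 2 ≤ 2*K := by exact_mod_cast hup
    have core : (x:ℝ)*((y:ℝ)+2) + ((x:ℝ)+2)*(y:ℝ) + eps K^(2:ℕ)*(((x:ℝ)+2)*((y:ℝ)+2))
        ≤ lam K * (((x:ℝ)+1)*((y:ℝ)+1)) := by
      rw [lam_eq]
      have am1 : ((x:ℝ)+2)*((y:ℝ)+2) ≤ ((K:ℝ)+1)^2 := by nlinarith [sq_nonneg ((x:ℝ) - y)]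
      have am2 : ((x:ℝ)+1)*((y:ℝ)+1) ≤ ((K:ℝ)+1)^2 - 1 := by nlinarith [sq_nonneg ((x:ℝ) - y)]
      have hepos : 0 < eps K := eps_pos K
      have he1 : eps K ≤ 1 := by
        rw [← heps]; nlinarith
      have h1 : eps K^(2:ℕ) * (((x:ℝ)+2)*((y:ℝ)+2)) ≤ eps K := by
        have := mul_le_mul_of_nonneg_left am1 (sq_nonneg (eps K))
        calc eps K^(2:ℕ) * (((x:ℝ)+2)*((y:ℝ)+2)) ≤ eps K^(2:ℕ) * ((K:ℝ)+1)^2 := by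
              rw [pow_two]; rw [sq] at this; exact this
          _ = eps K * (eps K * ((K:ℝ)+1)^2) := by ring
          _ = eps K := by rw [heps, mul_one]
      have h2 : eps K * (((x:ℝ)+1)*((y:ℝ)+1)) ≤ eps K * (((K:ℝ)+1)^2 - 1) :=
        mul_le_mul_of_nonneg_left am2 hepos.le
      nlinarith [h1, h2, heps, hepos.le, he1]
    calc vfun K (x-1, y+1) + vfun K (x+1, y-1) + vfun K (x+1, y+1)
        = eps K ^ (x+y) * ((x:ℝ)*((y:ℝ)+2) + ((x:ℝ)+2)*(y:ℝ)
            + eps K^(2:ℕ)*(((x:ℝ)+2)*((y:ℝ)+2))) := by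
          unfold vfun; simp only [e1, e2, e3]; push_cast; ring
      _ ≤ eps K ^ (x+y) * (lam K * (((x:ℝ)+1)*((y:ℝ)+1))) :=
          mul_le_mul_of_nonneg_left core hE.le
      _ = lam K * vfun K (x, y) := by unfold vfun; ring
  · rw [if_neg (not_le.mpr hup)]
    have core : (x:ℝ)*((y:ℝ)+2) + ((x:ℝ)+2)*(y:ℝ)
        ≤ lam K * (((x:ℝ)+1)*((y:ℝ)+1)) := by
      rw [lam_eq]
      have am2 : ((x:ℝ)+1)*((y:ℝ)+1) ≤ ((K:ℝ)+1)^2 := by nlinarith [sq_nonneg ((x:ℝ) - y)]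
      have hepos : 0 < eps K := eps_pos K
      have h2 : eps K * (((x:ℝ)+1)*((y:ℝ)+1)) ≤ eps K * ((K:ℝ)+1)^2 :=
        mul_le_mul_of_nonneg_left am2 hepos.le
      rw [heps] at h2
      nlinarith [h2]
    calc vfun K (x-1, y+1) + vfun K (x+1, y-1) + 0
        = eps K ^ (x+y) * ((x:ℝ)*((y:ℝ)+2) + ((x:ℝ)+2)*(y:ℝ)) := by
          unfold vfun; simp only [e1, e2]; push_cast; ring
      _ ≤ eps K ^ (x+y) * (lam K * (((x:ℝ)+1)*((y:ℝ)+1))) :=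
          mul_le_mul_of_nonneg_left core hE.le
      _ = lam K * vfun K (x, y) := by unfold vfun; ring

lemma lam_pos (K : ℕ) : 0 < lam K := lt_of_lt_of_le one_pos (one_le_lam K)

lemma prod_add (p : ℤ × ℤ) (a b : ℤ) : p + (a, b) = (p.1 + a, p.2 + b) := rfl

lemma qwalks_le (K : ℕ) (q : ℤ × ℤ) (hq1 : 0 ≤ q.1) (hq2 : 0 ≤ q.2)
    (hqK : q.1 + q.2 = 2*K) :
    ∀ n (p : ℤ × ℤ), 0 ≤ p.1 → 0 ≤ p.2 → p.1 + p.2 ≤ 2*K →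
      (qwalks stepsA n p q : ℝ) * vfun K q ≤ lam K ^ n * vfun K p
  | 0, p, h1, h2, h3 => by
    simp only [qwalks, pow_zero, one_mul]
    by_cases hpq : p = q
    · rw [if_pos hpq, hpq]; norm_num
    · rw [if_neg hpq]; norm_num
      exact vfun_nonneg K (by linarith) (by linarith)
  | n+1, p, h1, h2, h3 => by
    obtain ⟨x, y⟩ := p
    simp only at h1 h2 h3
    have hvq : 0 ≤ vfun K q := (vfun_pos K hq1 hq2).le
    have hln : (0:ℝ) ≤ lam K ^ n := (pow_pos (lam_pos K) n).le
    -- three term bounds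
    have t1 : ((if 0 ≤ ((x,y) + ((-1:ℤ),(1:ℤ))).1 ∧ 0 ≤ ((x,y) + ((-1:ℤ),(1:ℤ))).2
          then qwalks stepsA n ((x,y) + (-1,1)) q else 0 : ℕ) : ℝ) * vfun K q
        ≤ lam K ^ n * vfun K (x-1, y+1) := by
      rw [prod_add]
      by_cases hc : 0 ≤ x + -1 ∧ 0 ≤ y + 1
      · rw [if_pos (by exact hc)]
        have := qwalks_le K q hq1 hq2 hqK n (x + -1, y + 1) hc.1 hc.2 (by omega)
        simpa [show x + -1 = x - 1 by ring] using this
      · rw [if_neg (by exact hc)]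
        simp only [Nat.cast_zero, zero_mul]
        exact mul_nonneg hln (vfun_nonneg K (by simp; omega) (by simp; omega))
    have t3 : ((if 0 ≤ ((x,y) + ((1:ℤ),(-1:ℤ))).1 ∧ 0 ≤ ((x,y) + ((1:ℤ),(-1:ℤ))).2
          then qwalks stepsA n ((x,y) + (1,-1)) q else 0 : ℕ) : ℝ) * vfun K q
        ≤ lam K ^ n * vfun K (x+1, y-1) := by
      rw [prod_add]
      by_cases hc : 0 ≤ x + 1 ∧ 0 ≤ y + -1
      · rw [if_pos (by exact hc)]
        have := qwalks_le K q hq1 hq2 hqK n (x + 1, y + -1) hc.1 hc.2 (by omega)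
        simpa [show y + -1 = y - 1 by ring] using this
      · rw [if_neg (by exact hc)]
        simp only [Nat.cast_zero, zero_mul]
        exact mul_nonneg hln (vfun_nonneg K (by simp; omega) (by simp; omega))
    have t2 : ((if 0 ≤ ((x,y) + ((1:ℤ),(1:ℤ))).1 ∧ 0 ≤ ((x,y) + ((1:ℤ),(1:ℤ))).2
          then qwalks stepsA n ((x,y) + (1,1)) q else 0 : ℕ) : ℝ) * vfun K q
        ≤ lam K ^ n * (if x + y + 2 ≤ 2*K then vfun K (x+1, y+1) else 0) := by
      rw [prod_add]
      rw [if_pos ⟨by omega, by omega⟩]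
      by_cases hl : x + y + 2 ≤ 2*K
      · rw [if_pos hl]
        exact qwalks_le K q hq1 hq2 hqK n (x + 1, y + 1) (by omega) (by omega) (by omega)
      · rw [if_neg hl]
        have hz : qwalks stepsA n (x+1, y+1) q = 0 := by
          apply qwalks_zero
          intro k
          have : (0:ℤ) ≤ (k:ℤ) := Int.natCast_nonneg k
          simp only
          omega
        rw [hz]
        simp
    have expand : (qwalks stepsA (n+1) (x,y) q : ℝ)
        = ((if 0 ≤ ((x,y) + ((-1:ℤ),(1:ℤ))).1 ∧ 0 ≤ ((x,y) + ((-1:ℤ),(1:ℤ))).2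
            then qwalks stepsA n ((x,y) + (-1,1)) q else 0 : ℕ) : ℝ)
          + ((if 0 ≤ ((x,y) + ((1:ℤ),(1:ℤ))).1 ∧ 0 ≤ ((x,y) + ((1:ℤ),(1:ℤ))).2
            then qwalks stepsA n ((x,y) + (1,1)) q else 0 : ℕ) : ℝ)
          + ((if 0 ≤ ((x,y) + ((1:ℤ),(-1:ℤ))).1 ∧ 0 ≤ ((x,y) + ((1:ℤ),(-1:ℤ))).2
            then qwalks stepsA n ((x,y) + (1,-1)) q else 0 : ℕ) : ℝ) := by
      simp only [qwalks]
      rw [sum_stepsA (f := fun s => if 0 ≤ ((x,y) + s).1 ∧ 0 ≤ ((x,y) + s).2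
            then qwalks stepsA n ((x,y) + s) q else 0)]
      push_cast
      ring
    calc (qwalks stepsA (n+1) (x,y) q : ℝ) * vfun K q
        ≤ lam K ^ n * (vfun K (x-1, y+1) + vfun K (x+1, y-1)
            + (if x + y + 2 ≤ 2*K then vfun K (x+1, y+1) else 0)) := by
          rw [expand]
          rw [add_mul, add_mul]
          calc _ ≤ lam K ^ n * vfun K (x-1, y+1)
                + lam K ^ n * (if x + y + 2 ≤ 2*K then vfun K (x+1, y+1) else 0)
                + lam K ^ n * vfun K (x+1, y-1) := by
                exact add_le_add (add_le_add t1 t2) t3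
            _ = _ := by ring
      _ ≤ lam K ^ n * (lam K * vfun K (x, y)) :=
          mul_le_mul_of_nonneg_left (key K x y h1 h2 h3) hln
      _ = lam K ^ (n+1) * vfun K (x, y) := by ring

lemma lam_half_lt_one (K : ℕ) : lam K / 2 < 1 := by
  have := lam_lt_two K; linarith

lemma lam_half_nonneg (K : ℕ) : 0 ≤ lam K / 2 := by
  have := lam_pos K; linarith

set_option maxHeartbeats 1000000 in
lemma summable_F (K : ℕ) (q : ℤ × ℤ) (hq1 : 0 ≤ q.1) (hq2 : 0 ≤ q.2)
    (hqK : q.1 + q.2 = 2*K) (p : ℤ × ℤ) (hp1 : 0 ≤ p.1) (hp2 : 0 ≤ p.2) :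
    Summable (fun n : ℕ => (qwalks stepsA n p q : ℝ) / 2 ^ n) := by
  by_cases hl : p.1 + p.2 ≤ 2*K
  · have hvq : 0 < vfun K q := vfun_pos K hq1 hq2
    apply Summable.of_nonneg_of_le (f := fun n => (vfun K p / vfun K q) * (lam K / 2)^n)
    · intro n; positivity
    · intro n
      have hb := qwalks_le K q hq1 hq2 hqK n p hp1 hp2 hl
      rw [div_le_iff₀ (by positivity : (0:ℝ) < 2^n)]
      have h2 : vfun K p / vfun K q * (lam K / 2)^n * 2^n = lam K ^ n * vfun K p / vfun K q := by
        rw [div_pow]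
        field_simp
      rw [h2, le_div_iff₀ hvq]
      linarith [hb]
    · exact (summable_geometric_of_lt_one (lam_half_nonneg K) (lam_half_lt_one K)).mul_left _
  · have hz : ∀ n, qwalks stepsA n p q = 0 := by
      intro n
      apply qwalks_zero
      intro k
      have : (0:ℤ) ≤ (k:ℤ) := Int.natCast_nonneg k
      omega
    apply Summable.congr (f := fun _ : ℕ => (0:ℝ))
    · exact summable_zero
    · intro n; rw [hz n]; simp

noncomputable def box (K : ℕ) : Finset (ℤ × ℤ) := Finset.Icc (0,0) (2*K, 2*K)

lemma mem_box {K : ℕ} {p : ℤ × ℤ} :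
    p ∈ box K ↔ (0 ≤ p.1 ∧ 0 ≤ p.2) ∧ (p.1 ≤ 2*K ∧ p.2 ≤ 2*K) := by
  simp [box, Finset.mem_Icc, Prod.le_def]

def Amat (K : ℕ) : Matrix (box K) (box K) ℚ := fun u w =>
  if (u:ℤ×ℤ).1 + (u:ℤ×ℤ).2 ≤ 2*K ∧ (w:ℤ×ℤ).1 + (w:ℤ×ℤ).2 ≤ 2*K
      ∧ ((w:ℤ×ℤ) - (u:ℤ×ℤ)) ∈ stepsA then 1/2 else 0

lemma bridge (K : ℕ) (z : ℤ × ℤ → ℝ) (u : box K) :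
    ∑ w : box K, (Amat K u w : ℝ) * z w =
      ∑ s ∈ stepsA, (if (u:ℤ×ℤ).1 + (u:ℤ×ℤ).2 ≤ 2*K ∧ 0 ≤ ((u:ℤ×ℤ)+s).1 ∧ 0 ≤ ((u:ℤ×ℤ)+s).2
          ∧ ((u:ℤ×ℤ)+s).1 + ((u:ℤ×ℤ)+s).2 ≤ 2*K
        then (1/2) * z ((u:ℤ×ℤ)+s) else 0) := by
  classical
  set p : ℤ × ℤ := (u:ℤ×ℤ) with hp
  have step1 : ∑ w : box K, (Amat K u w : ℝ) * z w
      = ∑ r ∈ box K, (if p.1+p.2 ≤ 2*K ∧ r.1+r.2 ≤ 2*K ∧ (r - p) ∈ stepsA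
          then (1/2 : ℝ) else 0) * z r := by
    rw [← Finset.sum_coe_sort (box K)
      (fun r => (if p.1+p.2 ≤ 2*K ∧ r.1+r.2 ≤ 2*K ∧ (r - p) ∈ stepsA then (1/2:ℝ) else 0) * z r)]
    apply Finset.sum_congr rfl
    intro w _
    unfold Amat
    split_ifs with h
    · norm_num
    · norm_num
  rw [step1]
  have step2 : ∀ r ∈ box K,
      (if p.1+p.2 ≤ 2*K ∧ r.1+r.2 ≤ 2*K ∧ (r - p) ∈ stepsA then (1/2:ℝ) else 0) * z r
      = ∑ s ∈ stepsA, (if r = p + s then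
          (if p.1+p.2 ≤ 2*K ∧ (p+s).1+(p+s).2 ≤ 2*K then (1/2) * z (p+s) else 0) else 0) := by
    intro r _
    have conv : ∀ s : ℤ × ℤ, (r = p + s) ↔ (s = r - p) := by
      intro s
      constructor
      · rintro rfl; simp
      · rintro rfl; simp
    simp only [conv]
    rw [Finset.sum_ite_eq' stepsA (r - p)
      (fun s => if p.1+p.2 ≤ 2*K ∧ (p+s).1+(p+s).2 ≤ 2*K then (1/2) * z (p+s) else 0)]
    have hadd : p + (r - p) = r := by simp
    rw [hadd]
    split_ifs <;> simp_all <;> tauto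
  rw [Finset.sum_congr rfl step2, Finset.sum_comm]
  apply Finset.sum_congr rfl
  intro s _
  rw [Finset.sum_ite_eq' (box K) (p+s)
      (fun _ => if p.1+p.2 ≤ 2*K ∧ (p+s).1+(p+s).2 ≤ 2*K then (1/2) * z (p+s) else 0)]
  by_cases hm : p + s ∈ box K
  · rw [if_pos hm]
    rw [mem_box] at hm
    split_ifs with h1 h2 h3 <;> try rfl
    · exact absurd ⟨h1.1, hm.1.1, hm.1.2, h1.2⟩ h2
    · exact absurd ⟨h3.1, h3.2.2.2⟩ h1
  · rw [if_neg hm]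
    rw [if_neg]
    intro h
    exact hm (mem_box.mpr ⟨⟨h.2.1, h.2.2.1⟩, by omega, by omega⟩)

noncomputable def FF (q p : ℤ × ℤ) : ℝ := ∑' n : ℕ, (qwalks stepsA n p q : ℝ) / 2 ^ n

lemma FF_zero (K : ℕ) (q : ℤ × ℤ) (hqK : q.1 + q.2 = 2*K) (p : ℤ × ℤ)
    (hl : 2*(K:ℤ) < p.1 + p.2) : FF q p = 0 := by
  unfold FF
  have hz : ∀ n, qwalks stepsA n p q = 0 := by
    intro n
    apply qwalks_zero
    intro k
    have : (0:ℤ) ≤ (k:ℤ) := Int.natCast_nonneg k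
    omega
  simp [hz]

lemma FF_rec (K : ℕ) (q : ℤ × ℤ) (hq1 : 0 ≤ q.1) (hq2 : 0 ≤ q.2)
    (hqK : q.1 + q.2 = 2*K) (p : ℤ × ℤ) (hp1 : 0 ≤ p.1) (hp2 : 0 ≤ p.2)
    (hp3 : p.1 + p.2 ≤ 2*K) :
    FF q p = (if p = q then 1 else 0)
      + ∑ s ∈ stepsA, (if 0 ≤ (p+s).1 ∧ 0 ≤ (p+s).2 ∧ (p+s).1 + (p+s).2 ≤ 2*K
          then (1/2) * FF q (p+s) else 0) := by
  classical
  have hsum := summable_F K q hq1 hq2 hqK p hp1 hp2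
  have h0 : FF q p = (qwalks stepsA 0 p q : ℝ) / 2 ^ 0
      + ∑' n : ℕ, (qwalks stepsA (n+1) p q : ℝ) / 2 ^ (n+1) := by
    unfold FF
    exact Summable.tsum_eq_zero_add hsum
  rw [h0]
  congr 1
  · simp only [qwalks, pow_zero]
    split_ifs <;> norm_num
  -- now the tail
  have expand : ∀ n : ℕ, (qwalks stepsA (n+1) p q : ℝ) / 2 ^ (n+1)
      = ∑ s ∈ stepsA, (if 0 ≤ (p+s).1 ∧ 0 ≤ (p+s).2
          then (1/2) * ((qwalks stepsA n (p+s) q : ℝ) / 2 ^ n) else 0) := by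
    intro n
    simp only [qwalks]
    push_cast
    rw [Finset.sum_div]
    apply Finset.sum_congr rfl
    intro s _
    split_ifs with h
    · rw [pow_succ]; ring
    · simp
  simp only [expand]
  rw [Summable.tsum_finsetSum]
  · apply Finset.sum_congr rfl
    intro s _
    by_cases hc : 0 ≤ (p+s).1 ∧ 0 ≤ (p+s).2
    · simp only [if_pos hc]
      rw [tsum_mul_left]
      by_cases hl : (p+s).1 + (p+s).2 ≤ 2*K
      · rw [if_pos ⟨hc.1, hc.2, hl⟩]; rfl
      · rw [if_neg (by tauto)]
        have : FF q (p+s) = 0 := FF_zero K q hqK (p+s) (by omega)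
        unfold FF at this
        rw [this, mul_zero]
    · simp only [if_neg hc, if_neg (by tauto : ¬(0 ≤ (p+s).1 ∧ 0 ≤ (p+s).2 ∧ (p+s).1 + (p+s).2 ≤ 2*K))]
      exact tsum_zero
  · intro s _
    by_cases hc : 0 ≤ (p+s).1 ∧ 0 ≤ (p+s).2
    · simp only [if_pos hc]
      exact (summable_F K q hq1 hq2 hqK (p+s) hc.1 hc.2).mul_left _
    · simp only [if_neg hc]
      exact summable_zero

lemma Geq (K : ℕ) (q : ℤ × ℤ) (hq1 : 0 ≤ q.1) (hq2 : 0 ≤ q.2)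
    (hqK : q.1 + q.2 = 2*K) (u : box K) :
    FF q (u:ℤ×ℤ) = (if (u:ℤ×ℤ) = q then (1:ℝ) else 0)
      + ∑ w : box K, (Amat K u w : ℝ) * FF q (w:ℤ×ℤ) := by
  classical
  obtain ⟨hu0, hu1⟩ := mem_box.mp u.2
  rw [bridge K (fun r => FF q r) u]
  by_cases hl : (u:ℤ×ℤ).1 + (u:ℤ×ℤ).2 ≤ 2*K
  · rw [FF_rec K q hq1 hq2 hqK (u:ℤ×ℤ) hu0.1 hu0.2 hl]
    congr 1
    apply Finset.sum_congr rfl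
    intro s _
    split_ifs <;> tauto
  · -- level too high: both sides zero
    rw [FF_zero K q hqK _ (by omega)]
    have h1 : ((u:ℤ×ℤ) = q) = False := by
      simp only [eq_iff_iff, iff_false]
      intro h; rw [h] at hl; omega
    rw [if_congr (iff_of_eq h1) rfl rfl, if_false]
    have h2 : ∀ s ∈ stepsA, (if (u:ℤ×ℤ).1 + (u:ℤ×ℤ).2 ≤ 2*K ∧ 0 ≤ ((u:ℤ×ℤ)+s).1
        ∧ 0 ≤ ((u:ℤ×ℤ)+s).2 ∧ ((u:ℤ×ℤ)+s).1 + ((u:ℤ×ℤ)+s).2 ≤ 2*K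
        then (1/2) * FF q ((u:ℤ×ℤ)+s) else 0) = 0 := by
      intro s _
      rw [if_neg (by tauto)]
    rw [Finset.sum_congr rfl h2]
    simp

lemma ML (K : ℕ) (u : box K) :
    ∑ w : box K, (Amat K u w : ℝ) * vfun K (w:ℤ×ℤ) ≤ (lam K / 2) * vfun K (u:ℤ×ℤ) := by
  classical
  obtain ⟨hu0, hu1⟩ := mem_box.mp u.2
  set p : ℤ × ℤ := (u:ℤ×ℤ) with hpdef
  by_cases hl : p.1 + p.2 ≤ 2*K
  · rw [bridge K (vfun K) u]
    rw [sum_stepsA (f := fun s => if p.1 + p.2 ≤ 2*K ∧ 0 ≤ (p+s).1 ∧ 0 ≤ (p+s).2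
          ∧ (p+s).1 + (p+s).2 ≤ 2*K then (1/2) * vfun K (p+s) else 0)]
    have hv : 0 ≤ vfun K p := vfun_nonneg K (by omega) (by omega)
    have b1 : (if p.1 + p.2 ≤ 2*K ∧ (0:ℤ) ≤ (p+(-1,1)).1 ∧ (0:ℤ) ≤ (p+(-1,1)).2
          ∧ (p+(-1,1)).1 + (p+(-1,1)).2 ≤ 2*(K:ℤ) then (1/2) * vfun K (p+(-1,1)) else 0)
        ≤ (1/2) * vfun K (p.1-1, p.2+1) := by
      have hveq : vfun K (p+(-1,1)) = vfun K (p.1-1, p.2+1) := by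
        rw [prod_add, show p.1 + -1 = p.1 - 1 by ring]
      split_ifs with h
      · rw [hveq]
      · have : 0 ≤ vfun K (p.1-1, p.2+1) := vfun_nonneg K (by simp; omega) (by simp; omega)
        linarith
    have b3 : (if p.1 + p.2 ≤ 2*K ∧ (0:ℤ) ≤ (p+(1,-1)).1 ∧ (0:ℤ) ≤ (p+(1,-1)).2
          ∧ (p+(1,-1)).1 + (p+(1,-1)).2 ≤ 2*(K:ℤ) then (1/2) * vfun K (p+(1,-1)) else 0)
        ≤ (1/2) * vfun K (p.1+1, p.2-1) := by
      have hveq : vfun K (p+(1,-1)) = vfun K (p.1+1, p.2-1) := by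
        rw [prod_add, show p.2 + -1 = p.2 - 1 by ring]
      split_ifs with h
      · rw [hveq]
      · have : 0 ≤ vfun K (p.1+1, p.2-1) := vfun_nonneg K (by simp; omega) (by simp; omega)
        linarith
    have b2 : (if p.1 + p.2 ≤ 2*K ∧ (0:ℤ) ≤ (p+(1,1)).1 ∧ (0:ℤ) ≤ (p+(1,1)).2
          ∧ (p+(1,1)).1 + (p+(1,1)).2 ≤ 2*(K:ℤ) then (1/2) * vfun K (p+(1,1)) else 0)
        ≤ (1/2) * (if p.1 + p.2 + 2 ≤ 2*K then vfun K (p.1+1, p.2+1) else 0) := by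
      have hveq : vfun K (p+(1,1)) = vfun K (p.1+1, p.2+1) := by rw [prod_add]
      by_cases h2 : p.1 + p.2 + 2 ≤ 2*K
      · rw [if_pos h2, if_pos ⟨hl, by simp [prod_add]; omega, by simp [prod_add]; omega,
            by simp [prod_add]; omega⟩, hveq]
      · rw [if_neg h2, if_neg (by simp [prod_add]; omega), mul_zero]
    have hkey := key K p.1 p.2 (by omega) (by omega) hl
    calc _ ≤ (1/2) * vfun K (p.1-1, p.2+1)
          + (1/2) * (if p.1 + p.2 + 2 ≤ 2*K then vfun K (p.1+1, p.2+1) else 0)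
          + (1/2) * vfun K (p.1+1, p.2-1) := add_le_add (add_le_add b1 b2) b3
      _ = (1/2) * (vfun K (p.1-1, p.2+1) + vfun K (p.1+1, p.2-1)
          + (if p.1 + p.2 + 2 ≤ 2*K then vfun K (p.1+1, p.2+1) else 0)) := by ring
      _ ≤ (1/2) * (lam K * vfun K (p.1, p.2)) := by linarith [hkey]
      _ = (lam K / 2) * vfun K p := by rw [show (p.1, p.2) = p from rfl]; ring
  · have hz : ∀ w : box K, (Amat K u w : ℝ) * vfun K (w:ℤ×ℤ) = 0 := by
      intro w
      unfold Amat
      rw [if_neg (by tauto)]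
      simp
    rw [Finset.sum_congr rfl (fun w _ => hz w)]
    have hv : 0 ≤ vfun K p := vfun_nonneg K (by omega) (by omega)
    have := lam_half_nonneg K
    simp only [Finset.sum_const_zero]
    positivity

lemma Amat_nonneg (K : ℕ) (u w : box K) : (0:ℝ) ≤ (Amat K u w : ℝ) := by
  unfold Amat
  split_ifs <;> norm_num

lemma box_zero_mem (K : ℕ) : ((0,0) : ℤ × ℤ) ∈ box K := by
  rw [mem_box]; norm_num

lemma uniq (K : ℕ) (d : box K → ℝ)
    (hd : ∀ u, d u = ∑ w : box K, (Amat K u w : ℝ) * d w) : ∀ u, d u = 0 := by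
  classical
  haveI : Nonempty (box K) := ⟨⟨(0,0), box_zero_mem K⟩⟩
  have hvpos : ∀ u : box K, 0 < vfun K (u:ℤ×ℤ) :=
    fun u => vfun_pos K (mem_box.mp u.2).1.1 (mem_box.mp u.2).1.2
  set f : box K → ℝ := fun u => |d u| / vfun K (u:ℤ×ℤ) with hf
  have hne : (Finset.univ : Finset (box K)).Nonempty := Finset.univ_nonempty
  set t : ℝ := Finset.univ.sup' hne f with htdef
  have ht : ∀ u : box K, |d u| ≤ t * vfun K (u:ℤ×ℤ) := by
    intro u
    have := Finset.le_sup' f (Finset.mem_univ u)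
    rw [← htdef] at this
    exact (div_le_iff₀ (hvpos u)).mp this
  have ht0 : 0 ≤ t := by
    have h1 : 0 ≤ f ⟨(0,0), box_zero_mem K⟩ := div_nonneg (abs_nonneg _) (hvpos _).le
    exact le_trans h1 (Finset.le_sup' f (Finset.mem_univ _))
  obtain ⟨u₁, -, hu₁⟩ := Finset.exists_mem_eq_sup' hne f
  have hchain : |d u₁| ≤ t * ((lam K / 2) * vfun K (u₁:ℤ×ℤ)) := by
    calc |d u₁| = |∑ w : box K, (Amat K u₁ w : ℝ) * d w| := by rw [← hd u₁]
      _ ≤ ∑ w : box K, |(Amat K u₁ w : ℝ) * d w| := Finset.abs_sum_le_sum_abs _ _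
      _ = ∑ w : box K, (Amat K u₁ w : ℝ) * |d w| := by
          apply Finset.sum_congr rfl
          intro w _
          rw [abs_mul, abs_of_nonneg (Amat_nonneg K u₁ w)]
      _ ≤ ∑ w : box K, (Amat K u₁ w : ℝ) * (t * vfun K (w:ℤ×ℤ)) := by
          apply Finset.sum_le_sum
          intro w _
          exact mul_le_mul_of_nonneg_left (ht w) (Amat_nonneg K u₁ w)
      _ = t * ∑ w : box K, (Amat K u₁ w : ℝ) * vfun K (w:ℤ×ℤ) := by
          rw [Finset.mul_sum]
          apply Finset.sum_congr rfl
          intro w _; ring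
      _ ≤ t * ((lam K / 2) * vfun K (u₁:ℤ×ℤ)) :=
          mul_le_mul_of_nonneg_left (ML K u₁) ht0
  have htt : t ≤ t * (lam K / 2) := by
    have h2 : t = |d u₁| / vfun K (u₁:ℤ×ℤ) := hu₁
    have h3 : t * vfun K (u₁:ℤ×ℤ) = |d u₁| := by
      rw [h2, div_mul_cancel₀ _ (ne_of_gt (hvpos u₁))]
    have h4 : t * vfun K (u₁:ℤ×ℤ) ≤ (t * (lam K / 2)) * vfun K (u₁:ℤ×ℤ) := by
      rw [h3]
      calc |d u₁| ≤ t * ((lam K / 2) * vfun K (u₁:ℤ×ℤ)) := hchain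
        _ = (t * (lam K / 2)) * vfun K (u₁:ℤ×ℤ) := by ring
    exact le_of_mul_le_mul_right h4 (hvpos u₁)
  have hlam := lam_half_lt_one K
  have ht00 : t ≤ 0 := by nlinarith
  intro u
  have := ht u
  have hv := (hvpos u).le
  have : |d u| ≤ 0 := le_trans (ht u) (by nlinarith [hvpos u])
  exact abs_nonpos_iff.mp this

lemma exists_sol (K : ℕ) (q : ℤ × ℤ) :
    ∃ G : box K → ℚ, ∀ u : box K,
      G u = (if (u:ℤ×ℤ) = q then 1 else 0) + ∑ w : box K, Amat K u w * G w := by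
  classical
  set L := (1 - Amat K).mulVecLin with hL
  have hmul : ∀ (x : box K → ℚ) (u : box K),
      ((1 - Amat K).mulVec x) u = x u - ∑ w : box K, Amat K u w * x w := by
    intro x u
    rw [Matrix.sub_mulVec, Matrix.one_mulVec]
    simp [Matrix.mulVec, dotProduct]
  have hinj : Function.Injective L := by
    intro a b hab
    have hz : L (a - b) = 0 := by rw [map_sub, hab, sub_self]
    have hz' : ∀ u, (a - b) u = ∑ w : box K, Amat K u w * (a - b) w := by
      intro u
      have := congrFun hz u
      rw [hL] at this
      simp only [Matrix.mulVecLin_apply] at this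
      rw [hmul (a-b) u] at this
      have : (a - b) u - ∑ w : box K, Amat K u w * (a - b) w = 0 := this
      linarith
    have hzero : ∀ u, ((a - b) u : ℝ) = 0 := by
      apply uniq K
      intro u
      push_cast [hz' u]
      rfl
    funext u
    have := hzero u
    have : ((a - b) u : ℝ) = 0 := this
    have h0 : (a - b) u = 0 := by exact_mod_cast this
    have : a u - b u = 0 := h0
    linarith
  have hsurj : Function.Surjective L := LinearMap.injective_iff_surjective.mp hinj
  obtain ⟨G, hG⟩ := hsurj (fun u => if (u:ℤ×ℤ) = q then 1 else 0)
  refine ⟨G, fun u => ?_⟩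
  have := congrFun hG u
  rw [hL] at this
  simp only [Matrix.mulVecLin_apply] at this
  rw [hmul G u] at this
  linarith [this]

lemma FF_rat (K : ℕ) (q : ℤ × ℤ) (hq1 : 0 ≤ q.1) (hq2 : 0 ≤ q.2)
    (hqK : q.1 + q.2 = 2*K) : ∃ g : ℚ, FF q ((0:ℤ),(0:ℤ)) = (g : ℝ) := by
  classical
  obtain ⟨G, hG⟩ := exists_sol K q
  set d : box K → ℝ := fun u => FF q (u:ℤ×ℤ) - (G u : ℝ) with hd
  have hzero : ∀ u, d u = 0 := by
    apply uniq K
    intro u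
    have h1 := Geq K q hq1 hq2 hqK u
    have h2 : (G u : ℝ) = (if (u:ℤ×ℤ) = q then (1:ℝ) else 0)
        + ∑ w : box K, (Amat K u w : ℝ) * (G w : ℝ) := by
      have := hG u
      calc (G u : ℝ) = ((((if (u:ℤ×ℤ) = q then (1:ℚ) else 0)
            + ∑ w : box K, Amat K u w * G w : ℚ)) : ℝ) := by rw [← this]
        _ = _ := by
            push_cast [apply_ite (fun r : ℚ => (r : ℝ))]
            norm_num
    calc d u = FF q (u:ℤ×ℤ) - (G u : ℝ) := rfl
      _ = (∑ w : box K, (Amat K u w : ℝ) * FF q (w:ℤ×ℤ))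
          - ∑ w : box K, (Amat K u w : ℝ) * (G w : ℝ) := by rw [h1, h2]; ring
      _ = ∑ w : box K, (Amat K u w : ℝ) * d w := by
          rw [← Finset.sum_sub_distrib]
          apply Finset.sum_congr rfl
          intro w _
          rw [hd]
          ring
  refine ⟨G ⟨(0,0), box_zero_mem K⟩, ?_⟩
  have := hzero ⟨(0,0), box_zero_mem K⟩
  rw [hd] at this
  simp only at this
  linarith [this]

/-- For model A, the sum over n of (number of walks of length n from (0,0) to (i,j))/2^n
converges and is a rational number. -/
theorem stmt6 (i j : ℕ) :
    Summable (fun n : ℕ => (qwalks stepsA n (0, 0) ((i : ℤ), (j : ℤ)) : ℝ) / 2 ^ n) ∧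
    ∃ q : ℚ, ∑' n : ℕ, (qwalks stepsA n (0, 0) ((i : ℤ), (j : ℤ)) : ℝ) / 2 ^ n = (q : ℝ) := by
  by_cases hpar : ∃ K : ℕ, (i:ℤ) + (j:ℤ) = 2*K
  · obtain ⟨K, hK⟩ := hpar
    have hq1 : (0:ℤ) ≤ ((i:ℤ),(j:ℤ)).1 := Int.natCast_nonneg i
    have hq2 : (0:ℤ) ≤ ((i:ℤ),(j:ℤ)).2 := Int.natCast_nonneg j
    have hqK : ((i:ℤ),(j:ℤ)).1 + ((i:ℤ),(j:ℤ)).2 = 2*K := hK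
    constructor
    · exact summable_F K ((i:ℤ),(j:ℤ)) hq1 hq2 hqK ((0:ℤ),(0:ℤ)) le_rfl le_rfl
    · obtain ⟨g, hg⟩ := FF_rat K ((i:ℤ),(j:ℤ)) hq1 hq2 hqK
      exact ⟨g, hg⟩
  · have hz : ∀ n, qwalks stepsA n ((0:ℤ),(0:ℤ)) ((i:ℤ),(j:ℤ)) = 0 := by
      intro n
      apply qwalks_zero
      intro k hk
      simp only at hk
      exact hpar ⟨k, by omega⟩
    constructor
    · apply Summable.congr (f := fun _ : ℕ => (0:ℝ)) summable_zero
      intro n; rw [hz n]; simp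
    · refine ⟨0, ?_⟩
      have : ∀ n : ℕ, (qwalks stepsA n ((0:ℤ),(0:ℤ)) ((i:ℤ),(j:ℤ)) : ℝ) / 2 ^ n = 0 := by
        intro n; rw [hz n]; simp
      rw [tsum_congr this]
      simp
end

section
/- The formal power series β(x) := Σ_{n≥0} B_n x^{n+1} (ordinary generating function of the Bernoulli numbers, shifted by one) satisfies the functional equation β(x) − β(x/(x+1)) = x²/(x+1)², as an identity of formal power series. -/
open PowerSeries

/-- Composition f(g) of formal power series (intended for g with zero constant term). -/
noncomputable def pscomp {R : Type*} [CommRing R] (f g : PowerSeries R) : PowerSeries R :=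
  PowerSeries.mk fun n =>
    ∑ k ∈ Finset.range (n + 1), (PowerSeries.coeff k f) * PowerSeries.coeff n (g ^ k)

/-- The power series Σ (-1)^n x^n, i.e. 1/(1+x). -/
noncomputable def altA : PowerSeries ℚ := PowerSeries.mk fun n => (-1 : ℚ) ^ n

lemma inv_one_add_X : (1 + PowerSeries.X : PowerSeries ℚ)⁻¹ = altA := by
  rw [PowerSeries.inv_eq_iff_mul_eq_one (by simp)]
  ext n
  rw [mul_add, mul_one, map_add, PowerSeries.coeff_one]
  rcases n with _ | m
  · simp [altA, PowerSeries.coeff_mk]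
  · rw [PowerSeries.coeff_succ_mul_X]
    simp [altA, PowerSeries.coeff_mk, pow_succ]

lemma coeff_altA_pow (k n : ℕ) :
    PowerSeries.coeff n (altA ^ k) = (-1 : ℚ) ^ n * ((n + k - 1).choose n : ℚ) := by
  induction k generalizing n with
  | zero =>
    rcases n with _ | m
    · simp
    · simp [Nat.choose_eq_zero_of_lt (by omega : m + 1 + 0 - 1 < m + 1)]
  | succ k ih =>
    rw [pow_succ, PowerSeries.coeff_mul, Finset.Nat.sum_antidiagonal_eq_sum_range_succ_mk]
    have hA : ∀ j, PowerSeries.coeff j altA = (-1 : ℚ) ^ j := fun j => by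
      simp [altA, PowerSeries.coeff_mk]
    have step : ∀ p ∈ Finset.range (n + 1),
        PowerSeries.coeff p (altA ^ k) * PowerSeries.coeff (n - p) altA
          = (-1 : ℚ) ^ n * ((p + k - 1).choose p : ℚ) := by
      intro p hp
      rw [Finset.mem_range] at hp
      rw [ih, hA, mul_right_comm, ← pow_add, Nat.add_sub_cancel' (by omega : p ≤ n)]
    rw [Finset.sum_congr rfl step, ← Finset.mul_sum]
    congr 1
    have : ∑ p ∈ Finset.range (n + 1), ((p + k - 1).choose p : ℚ)
        = ((n + (k + 1) - 1).choose n : ℚ) := by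
      rcases k with _ | j
      · -- k = 0 : sum of (p-1).choose p = 1 (only p = 0 contributes)
        rw [Finset.sum_eq_single 0]
        · simp
        · intro p _ hp
          rcases p with _ | q
          · exact absurd rfl hp
          · simp [Nat.choose_eq_zero_of_lt (by omega : q + 1 + 0 - 1 < q + 1)]
        · simp
      · -- k = j + 1
        have h1 : ∀ p, (p + (j + 1) - 1).choose p = (p + j).choose j := fun p => by
          have : p + (j + 1) - 1 = p + j := by omega
          rw [this, ← Nat.choose_symm (by omega : j ≤ p + j), Nat.add_sub_cancel]
        have h2 : n + (j + 1 + 1) - 1 = n + j + 1 := by omega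
        push_cast [h1, h2]
        rw [show (∑ p ∈ Finset.range (n + 1), ((p + j).choose j : ℚ))
            = ((∑ p ∈ Finset.range (n + 1), (p + j).choose j : ℕ) : ℚ) by push_cast; ring]
        rw [Nat.sum_range_add_choose n j]
        rw [← Nat.choose_symm (by omega : j + 1 ≤ n + j + 1)]
        congr 2
        omega
    rw [this]

lemma key_bernoulli (m : ℕ) :
    bernoulli m - ∑ j ∈ Finset.range (m + 1),
        bernoulli j * ((-1 : ℚ) ^ (m - j) * (m.choose j : ℚ))
      = (-1 : ℚ) ^ (m + 1) * m := by
  have step : ∀ j ∈ Finset.range (m + 1),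
      bernoulli j * ((-1 : ℚ) ^ (m - j) * (m.choose j : ℚ))
        = (-1 : ℚ) ^ m * ((m.choose j : ℚ) * bernoulli' j) := by
    intro j hj
    rw [Finset.mem_range] at hj
    rw [bernoulli, mul_comm ((-1 : ℚ) ^ j), mul_assoc, ← mul_assoc ((-1:ℚ)^j),
      ← pow_add, Nat.add_sub_cancel' (by omega : j ≤ m)]
    ring
  rw [Finset.sum_congr rfl step, ← Finset.mul_sum, Finset.sum_range_succ, sum_bernoulli',
    bernoulli, Nat.choose_self]
  push_cast
  ring

/-- The shifted ordinary generating function β(x) = Σ_{n≥0} B_n x^{n+1} of the Bernoulli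
numbers satisfies β(x) − β(x/(x+1)) = x²/(x+1)² as formal power series. -/
theorem stmt10 :
    let β : PowerSeries ℚ := PowerSeries.mk fun n => if n = 0 then 0 else bernoulli (n - 1)
    β - pscomp β (PowerSeries.X * (1 + PowerSeries.X : PowerSeries ℚ)⁻¹)
      = PowerSeries.X ^ 2 * ((1 + PowerSeries.X : PowerSeries ℚ)⁻¹) ^ 2 := by
  intro β
  rw [inv_one_add_X]
  ext n
  rw [map_sub]
  have hg : ∀ k j : ℕ, PowerSeries.coeff j ((PowerSeries.X * altA) ^ k)
      = if k ≤ j then (-1 : ℚ) ^ (j - k) * ((j - 1).choose (j - k) : ℚ) else 0 := by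
    intro k j
    rw [mul_pow, PowerSeries.coeff_X_pow_mul', coeff_altA_pow]
    split_ifs with h
    · congr 3
      omega
    · rfl
  have hβ : ∀ j, PowerSeries.coeff j β = if j = 0 then 0 else bernoulli (j - 1) := fun j => by
    simp [β, PowerSeries.coeff_mk]
  rw [show pscomp β (PowerSeries.X * altA) = PowerSeries.mk fun n =>
      ∑ k ∈ Finset.range (n + 1), (PowerSeries.coeff k β)
        * PowerSeries.coeff n ((PowerSeries.X * altA) ^ k) from rfl]
  rw [PowerSeries.coeff_mk, PowerSeries.coeff_mk, PowerSeries.coeff_X_pow_mul',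
    coeff_altA_pow]
  rcases n with _ | m
  · simp [hβ]
  · -- n = m + 1
    rw [Finset.sum_range_succ']
    have h0 : PowerSeries.coeff 0 β
        * PowerSeries.coeff (m + 1) ((PowerSeries.X * altA) ^ 0) = 0 := by
      rw [hβ]; simp
    have hterm : ∀ i ∈ Finset.range (m + 1),
        PowerSeries.coeff (i + 1) β
          * PowerSeries.coeff (m + 1) ((PowerSeries.X * altA) ^ (i + 1))
        = bernoulli i * ((-1 : ℚ) ^ (m - i) * (m.choose i : ℚ)) := by
      intro i hi
      rw [Finset.mem_range] at hi
      rw [hβ, hg, if_pos (by omega : i + 1 ≤ m + 1)]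
      have e1 : m + 1 - (i + 1) = m - i := by omega
      have e2 : m + 1 - 1 = m := rfl
      have e3 : m.choose (m - i) = m.choose i := by
        rw [← Nat.choose_symm (by omega : i ≤ m)]
      rw [e1, e2, e3]
      simp [Nat.succ_ne_zero]
    rw [Finset.sum_congr rfl hterm, h0, add_zero]
    have lhs := key_bernoulli m
    simp only [Nat.add_sub_cancel, Nat.succ_ne_zero, if_false]
    rw [lhs]
    rcases m with _ | p
    · norm_num
    · rw [if_pos (by omega : 2 ≤ p + 1 + 1)]
      rw [show p + 1 + 1 - 2 = p from by omega, show p + 2 - 1 = p + 1 from rfl,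
        Nat.choose_succ_self_right]
      push_cast
      ring
end

section
/- The power series F(x) = Σ_{n≥0} d_n x^n/(2n+3)!, where d_n = 2(2n+3)(−1)^n B_{2n+2}, satisfies the algebraic differential equation x F(x)² − 4x F'(x) − 6 F(x) + 1 = 0; equivalently F(x) = (2 − √x · cot(√x/2))/x as an analytic identity near 0. -/
open PowerSeries Finset

noncomputable def G : PowerSeries ℚ := PowerSeries.mk fun n => bernoulli n / n.factorial

lemma G_eq : G = bernoulliPowerSeries ℚ := by
  ext n; simp [G, bernoulliPowerSeries, coeff_mk]

lemma G_mul : G * (exp ℚ - 1) = X := by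
  rw [G_eq]; exact bernoulliPowerSeries_mul_exp_sub_one ℚ

lemma coeff_derivativeFun' (f : ℚ⟦X⟧) (n : ℕ) :
    PowerSeries.coeff n f.derivativeFun = PowerSeries.coeff (n + 1) f * (n + 1) :=
  coeff_derivative f n

lemma derivExpSub : (exp ℚ - 1).derivativeFun = exp ℚ := by
  ext n
  simp [coeff_derivativeFun', coeff_exp, Nat.factorial_succ]
  field_simp

lemma exp_sub_one_ne : (exp ℚ - 1) ≠ 0 := by
  intro h
  have := congrArg (PowerSeries.coeff 1) h
  simp [coeff_exp] at this

lemma derivX : (X : ℚ⟦X⟧).derivativeFun = 1 := by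
  ext n
  simp [coeff_derivativeFun', coeff_X, coeff_one]
  rcases n with _ | n <;> simp

lemma Gsq : G ^ 2 = G - X * G - X * G.derivativeFun := by
  have hd : G.derivativeFun * (exp ℚ - 1) + G * exp ℚ = 1 := by
    have h := congrArg PowerSeries.derivativeFun G_mul
    rw [PowerSeries.derivativeFun_mul, derivExpSub, derivX] at h
    simp only [smul_eq_mul] at h
    linear_combination h
  have key : G ^ 2 * (exp ℚ - 1) ^ 2 =
      (G - X * G - X * G.derivativeFun) * (exp ℚ - 1) ^ 2 := by
    have h1 : X * (G.derivativeFun * (exp ℚ - 1)) = X * (1 - G * exp ℚ) := by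
      linear_combination X * hd
    calc G ^ 2 * (exp ℚ - 1) ^ 2 = (G * (exp ℚ - 1)) ^ 2 := by ring
      _ = X ^ 2 := by rw [G_mul]
      _ = (G - X * G - X * G.derivativeFun) * (exp ℚ - 1) ^ 2 := by
          have expand : (G - X * G - X * G.derivativeFun) * (exp ℚ - 1) ^ 2 =
              (G * (exp ℚ - 1)) * (exp ℚ - 1) - X * (G * (exp ℚ - 1)) * (exp ℚ - 1)
                - (X * (G.derivativeFun * (exp ℚ - 1))) * (exp ℚ - 1) := by ring
          rw [expand, h1, G_mul]
          have : X * (1 - G * exp ℚ) * (exp ℚ - 1)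
              = X * (exp ℚ - 1) - X * (G * (exp ℚ - 1)) * exp ℚ := by ring
          rw [this, G_mul]
          ring
  exact mul_right_cancel₀ (pow_ne_zero 2 exp_sub_one_ne) key

lemma bern_odd {n : ℕ} (h : Odd n) (h1 : 1 < n) : bernoulli n = 0 := by
  rw [bernoulli_eq_bernoulli'_of_ne_one (by omega), bernoulli'_eq_zero_of_odd h h1]

lemma euler (m : ℕ) :
    ∑ k ∈ range (m + 2), bernoulli k / (k.factorial : ℚ) *
        (bernoulli (m + 1 - k) / ((m + 1 - k).factorial : ℚ)) =
      bernoulli (m+1) / ((m+1).factorial : ℚ) - bernoulli m / (m.factorial : ℚ)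
        - bernoulli (m+1) / ((m+1).factorial : ℚ) * (m + 1) := by
  have h := congrArg (PowerSeries.coeff (m + 1)) Gsq
  rw [pow_two, PowerSeries.coeff_mul] at h
  simp only [map_sub, coeff_succ_X_mul, coeff_derivativeFun'] at h
  rw [Nat.sum_antidiagonal_eq_sum_range_succ
    (fun a b => (PowerSeries.coeff a) G * (PowerSeries.coeff b) G)] at h
  simpa [G, coeff_mk] using h

lemma sum_even (g : ℕ → ℚ) (h : ∀ k, Odd k → g k = 0) (M : ℕ) :
    ∑ k ∈ range (2 * M + 1), g k = ∑ j ∈ range (M + 1), g (2 * j) := by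
  induction M with
  | zero => simp
  | succ M ih =>
      have e1 : 2 * (M + 1) + 1 = (2 * M + 1) + 1 + 1 := by ring
      rw [e1, sum_range_succ, sum_range_succ, ih, sum_range_succ,
        h (2 * M + 1) ⟨M, by ring⟩]
      have e2 : 2 * (M + 1) = 2 * M + 2 := by ring
      rw [sum_range_succ _ (M + 1), e2, sum_range_succ _ M]
      ring

lemma key_s11 (t : ℕ) :
    ∑ i ∈ range (t + 1), bernoulli (2*i+2) / ((2*i+2).factorial : ℚ) *
        (bernoulli (2*t+4 - (2*i+2)) / ((2*t+4 - (2*i+2)).factorial : ℚ)) =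
      -(2*(t:ℚ)+5) * bernoulli (2*t+4) / ((2*t+4).factorial : ℚ) := by
  set g : ℕ → ℚ := fun k =>
    bernoulli k / (k.factorial : ℚ) * (bernoulli (2*t+4 - k) / ((2*t+4 - k).factorial : ℚ))
    with hg
  have hodd : ∀ k, Odd k → g k = 0 := by
    intro k hk
    rcases eq_or_lt_of_le (show 1 ≤ k from hk.pos) with h1 | h1
    · have : 2*t+4 - k = 2*t+3 := by omega
      simp [hg, this, bern_odd (n := 2*t+3) (Nat.odd_iff.mpr (by omega)) (by omega)]
    · simp [hg, bern_odd hk (by omega)]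
  have he := euler (2*t+3)
  have e2 : 2*t+3+2 = 2*(t+2)+1 := by ring
  have e3 : 2*t+3+1 = 2*t+4 := by ring
  rw [e2, e3] at he
  rw [show (fun k => bernoulli k / (k.factorial : ℚ) *
      (bernoulli (2*t+3+1 - k) / ((2*t+3+1 - k).factorial : ℚ))) = g by
    funext k; simp [hg, e3]] at he
  rw [sum_even g hodd (t+2), sum_range_succ, Finset.sum_range_succ'] at he
  have h0 : g 0 = bernoulli (2*t+4) / ((2*t+4).factorial : ℚ) := by
    simp [hg]
  have hN : g (2*(t+2)) = bernoulli (2*t+4) / ((2*t+4).factorial : ℚ) := by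
    have e4 : 2*(t+2) = 2*t+4 := by ring
    simp [hg, e4]
  have h3 : bernoulli (2*t+3) = 0 :=
    bern_odd (Nat.odd_iff.mpr (by omega)) (by omega)
  rw [h0, hN, h3] at he
  have hsum : ∑ i ∈ range (t + 1), bernoulli (2*i+2) / ((2*i+2).factorial : ℚ) *
      (bernoulli (2*t+4 - (2*i+2)) / ((2*t+4 - (2*i+2)).factorial : ℚ))
      = ∑ i ∈ range (t + 1), g (2*(i+1)) := by
    refine sum_congr rfl fun i _ => ?_
    have e5 : 2*(i+1) = 2*i+2 := by ring
    rw [e5, hg]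
  rw [hsum]
  push_cast at he ⊢
  linear_combination he

/-- The power series F(x) = Σ_{n≥0} d_n x^n/(2n+3)! with d_n = 2(2n+3)(−1)^n B_{2n+2}
satisfies the algebraic differential equation x F² − 4x F' − 6F + 1 = 0. -/
theorem stmt11 :
    let F : PowerSeries ℚ := PowerSeries.mk fun n =>
      (2 * (2 * (n : ℚ) + 3) * (-1) ^ n * bernoulli (2 * n + 2)) /
        (Nat.factorial (2 * n + 3) : ℚ)
    PowerSeries.X * F ^ 2 - 4 * PowerSeries.X * F.derivativeFun - 6 * F + 1 = 0 := by
  intro F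
  have hF : ∀ n : ℕ, PowerSeries.coeff n F
      = 2 * (-1 : ℚ) ^ n * bernoulli (2 * n + 2) / ((2 * n + 2).factorial : ℚ) := by
    intro n
    have hfac : ((2 * n + 3).factorial : ℚ) = (2 * (n:ℚ) + 3) * ((2 * n + 2).factorial : ℚ) := by
      rw [show 2 * n + 3 = (2 * n + 2) + 1 by ring, Nat.factorial_succ]
      push_cast; ring
    have hne : ((2 * n + 2).factorial : ℚ) ≠ 0 := by
      exact_mod_cast (Nat.factorial_ne_zero _)
    have h3 : (2 * (n:ℚ) + 3) ≠ 0 := by positivity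
    simp only [F, coeff_mk, hfac]
    field_simp
  ext n
  rcases n with _ | t
  · simp only [map_add, map_sub, map_zero, coeff_zero_eq_constantCoeff, map_mul,
      constantCoeff_X, map_one, zero_mul, mul_zero, map_ofNat]
    have h0 : PowerSeries.constantCoeff F = 1 / 6 := by
      have := hF 0
      rw [coeff_zero_eq_constantCoeff] at this
      rw [this]
      norm_num [bernoulli_eq_bernoulli'_of_ne_one, bernoulli'_two]
    rw [h0]; norm_num
  · have e1 : PowerSeries.X * F ^ 2 - 4 * PowerSeries.X * F.derivativeFun - 6 * F + 1
        = PowerSeries.X * (F * F) - PowerSeries.X * ((PowerSeries.C (R := ℚ) 4) * F.derivativeFun)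
          - (PowerSeries.C (R := ℚ) 6) * F + 1 := by
      have h4 : (4 : ℚ⟦X⟧) = PowerSeries.C (R := ℚ) 4 := (map_ofNat (PowerSeries.C (R := ℚ)) 4).symm
      have h6 : (6 : ℚ⟦X⟧) = PowerSeries.C (R := ℚ) 6 := (map_ofNat (PowerSeries.C (R := ℚ)) 6).symm
      rw [← h4, ← h6]; ring
    rw [e1]
    rw [map_add, map_sub, map_sub, coeff_succ_X_mul, coeff_succ_X_mul, coeff_C_mul,
      coeff_C_mul, coeff_derivativeFun', PowerSeries.coeff_mul, coeff_one, map_zero,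
      if_neg (Nat.succ_ne_zero t)]
    rw [Nat.sum_antidiagonal_eq_sum_range_succ
      (fun a b => (PowerSeries.coeff a) F * (PowerSeries.coeff b) F)]
    have hsum : ∑ k ∈ range (t + 1), (PowerSeries.coeff k) F * (PowerSeries.coeff (t - k)) F
        = 4 * (-1 : ℚ) ^ t * ∑ i ∈ range (t + 1), bernoulli (2*i+2) / ((2*i+2).factorial : ℚ) *
            (bernoulli (2*t+4 - (2*i+2)) / ((2*t+4 - (2*i+2)).factorial : ℚ)) := by
      rw [mul_sum]
      refine sum_congr rfl fun k hk => ?_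
      have hk' : k ≤ t := by simpa using Nat.lt_succ_iff.mp (mem_range.mp hk)
      rw [hF k, hF (t - k)]
      have e2 : 2 * (t - k) + 2 = 2*t+4 - (2*k+2) := by omega
      have e3 : (-1 : ℚ) ^ (t - k) * (-1 : ℚ) ^ k = (-1 : ℚ) ^ t := by
        rw [← pow_add]; congr 1; omega
      rw [e2]
      field_simp
      linear_combination (4 * bernoulli (2*k+2) * bernoulli (2*t+4-(2*k+2))) * e3
    rw [hsum, key_s11 t, hF (t + 1)]
    have hne : ((2 * (t+1) + 2).factorial : ℚ) ≠ 0 := by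
      exact_mod_cast (Nat.factorial_ne_zero _)
    have e4 : 2 * (t + 1) + 2 = 2 * t + 4 := by ring
    rw [e4] at hne ⊢
    field_simp
    ring
end

section
/- There exists a unique formal power series G ∈ ℂ[[x]] with zero constant term satisfying G(x/(1+ix)) = −G(x) + x²/(1+ix). -/
open PowerSeries

noncomputable def ggu : PowerSeries ℂ := (1 + PowerSeries.C Complex.I * PowerSeries.X)⁻¹

noncomputable def gg : PowerSeries ℂ := PowerSeries.X * ggu

noncomputable def bb : PowerSeries ℂ := PowerSeries.X ^ 2 * ggu

lemma constantCoeff_ggu : PowerSeries.constantCoeff ggu = 1 := by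
  rw [ggu, PowerSeries.constantCoeff_inv]
  simp

lemma coeff_gg_pow (n k : ℕ) (h : n < k) : PowerSeries.coeff n (gg ^ k) = 0 := by
  rw [gg, mul_pow, PowerSeries.coeff_X_pow_mul']
  rw [if_neg (by omega)]

lemma coeff_gg_pow_self (n : ℕ) : PowerSeries.coeff n (gg ^ n) = 1 := by
  rw [gg, mul_pow, PowerSeries.coeff_X_pow_mul', if_pos le_rfl]
  simp [PowerSeries.coeff_zero_eq_constantCoeff, map_pow, constantCoeff_ggu]

lemma coeff_bb_zero : PowerSeries.coeff 0 bb = 0 := by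
  rw [bb, PowerSeries.coeff_X_pow_mul', if_neg (by omega)]

noncomputable def aa : ℕ → ℂ
  | n => (PowerSeries.coeff n bb -
      ∑ k ∈ (Finset.range n).attach, aa k.1 * PowerSeries.coeff n (gg ^ k.1)) / 2
decreasing_by exact Finset.mem_range.mp k.2

lemma aa_eq (n : ℕ) : aa n = (PowerSeries.coeff n bb -
    ∑ k ∈ Finset.range n, aa k * PowerSeries.coeff n (gg ^ k)) / 2 := by
  rw [aa]
  congr 1
  rw [← Finset.sum_attach (Finset.range n) (fun k => aa k * PowerSeries.coeff n (gg ^ k))]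

/-- There exists a unique formal power series G ∈ ℂ[[x]] with zero constant term
satisfying G(x/(1+ix)) = −G(x) + x²/(1+ix). -/
theorem stmt13 :
    ∃! G : PowerSeries ℂ,
      PowerSeries.constantCoeff G = 0 ∧
      pscomp G (PowerSeries.X * (1 + PowerSeries.C Complex.I * PowerSeries.X)⁻¹)
        = -G + PowerSeries.X ^ 2 *
            (1 + PowerSeries.C Complex.I * PowerSeries.X : PowerSeries ℂ)⁻¹ := by
  have hkey : ∀ G : PowerSeries ℂ,
      (pscomp G gg = -G + bb) ↔ ∀ n, PowerSeries.coeff n G = aa n := by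
    intro G
    constructor
    · intro hG n
      induction n using Nat.strong_induction_on with
      | _ n ih =>
        have h1 := congrArg (PowerSeries.coeff n) hG
        rw [pscomp, PowerSeries.coeff_mk, Finset.sum_range_succ, coeff_gg_pow_self,
          mul_one, map_add, map_neg] at h1
        rw [Finset.sum_congr rfl (fun k hk => by
          rw [ih k (Finset.mem_range.mp hk)])] at h1
        rw [aa_eq]
        linear_combination h1 / 2
    · intro h
      have hGeq : G = PowerSeries.mk aa := by
        ext n; rw [PowerSeries.coeff_mk]; exact h n
      subst hGeq
      ext n
      rw [pscomp, PowerSeries.coeff_mk, Finset.sum_range_succ, coeff_gg_pow_self,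
        mul_one, map_add, map_neg]
      simp only [PowerSeries.coeff_mk]
      rw [aa_eq n]
      ring
  refine ⟨PowerSeries.mk aa, ⟨?_, ?_⟩, ?_⟩
  · rw [← PowerSeries.coeff_zero_eq_constantCoeff_apply, PowerSeries.coeff_mk, aa_eq]
    simp [coeff_bb_zero]
  · exact (hkey _).2 (fun n => by rw [PowerSeries.coeff_mk])
  · intro G hG
    ext n
    rw [PowerSeries.coeff_mk]
    exact (hkey G).1 hG.2 n
end

section
/- Let v ∈ (0,1) be a real number. The polynomial p(s) = s²v² + (v²+v)s + v² − v + 1 has the property that for every integer n, p(s) and p(v^{2n+1} s) have no common root in ℂ. -/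
/-- For 0 < v < 1, the polynomial p(s) = v²s² + (v²+v)s + v²−v+1 and its rescaling
p(v^{2n+1} s) have no common root in ℂ, for every integer n. -/
theorem stmt16 (v : ℝ) (hv0 : 0 < v) (hv1 : v < 1) (n : ℤ) (z : ℂ)
    (hz : (v : ℂ) ^ 2 * z ^ 2 + ((v : ℂ) ^ 2 + (v : ℂ)) * z + ((v : ℂ) ^ 2 - v + 1) = 0) :
    ¬ ((v : ℂ) ^ 2 * ((v : ℂ) ^ (2 * n + 1) * z) ^ 2
        + ((v : ℂ) ^ 2 + (v : ℂ)) * ((v : ℂ) ^ (2 * n + 1) * z)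
        + ((v : ℂ) ^ 2 - v + 1) = 0) := by
  intro hw
  have hvne : (v:ℝ) ≠ 0 := ne_of_gt hv0
  -- v^(2n+1) ≠ 1 in ℝ
  have hune : v ^ (2*n+1) ≠ (1:ℝ) := by
    intro h
    have hlog := congrArg Real.log h
    rw [Real.log_zpow, Real.log_one] at hlog
    have hlv : Real.log v < 0 := Real.log_neg hv0 hv1
    have : (2*n+1 : ℤ) = 0 := by
      by_contra hne
      have : ((2*n+1 : ℤ) : ℝ) ≠ 0 := Int.cast_ne_zero.mpr hne
      exact this (by
        rcases mul_eq_zero.mp hlog with h1 | h1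
        · exact h1
        · exact absurd h1 (ne_of_lt hlv))
    omega
  have huneC : ((v:ℂ)) ^ (2*n+1) - 1 ≠ 0 := by
    intro h
    apply hune
    have : (v:ℂ) ^ (2*n+1) = 1 := by linear_combination h
    rw [← Complex.ofReal_zpow] at this
    exact_mod_cast this
  -- z ≠ 0
  have hzne : z ≠ 0 := by
    intro h
    rw [h] at hz
    have : (v:ℂ)^2 - v + 1 = 0 := by linear_combination hz
    have hr : (v^2 - v + 1 : ℝ) = 0 := by exact_mod_cast this
    nlinarith
  have key : ((v:ℂ) ^ (2*n+1) - 1) * (z * ((v:ℂ)^2 * z * ((v:ℂ) ^ (2*n+1) + 1) + ((v:ℂ)^2 + v))) = 0 := by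
    linear_combination hw - hz
  have h3 : (v:ℂ)^2 * z * ((v:ℂ) ^ (2*n+1) + 1) + ((v:ℂ)^2 + v) = 0 := by
    rcases mul_eq_zero.mp key with h | h
    · exact absurd h huneC
    rcases mul_eq_zero.mp h with h | h
    · exact absurd h hzne
    · exact h
  -- denominator nonzero
  have hupos : (0:ℝ) < v ^ (2*n+1) := zpow_pos hv0 _
  have hdne : (v^2 * (v ^ (2*n+1) + 1) : ℝ) ≠ 0 := by positivity
  have hdneC : ((v:ℂ)^2 * ((v:ℂ) ^ (2*n+1) + 1)) ≠ 0 := by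
    intro h
    apply hdne
    have : ((v^2 * (v ^ (2*n+1) + 1) : ℝ) : ℂ) = 0 := by
      push_cast [Complex.ofReal_zpow]
      linear_combination h
    exact_mod_cast this
  set r : ℝ := -(v^2 + v) / (v^2 * (v ^ (2*n+1) + 1)) with hr
  have hzr : z = (r : ℂ) := by
    rw [hr]
    push_cast [Complex.ofReal_zpow]
    rw [eq_div_iff hdneC]
    linear_combination h3
  rw [hzr] at hz
  have hreal : (v^2 * r^2 + (v^2+v)*r + (v^2 - v + 1) : ℝ) = 0 := by
    have : ((v^2 * r^2 + (v^2+v)*r + (v^2 - v + 1) : ℝ) : ℂ) = 0 := by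
      push_cast
      linear_combination hz
    exact_mod_cast this
  have h4 : (2*v^2*r + v^2 + v)^2 + 3*(v*(v-1))^2 = 0 := by linear_combination (4*v^2)*hreal
  nlinarith [sq_nonneg (2*v^2*r + v^2 + v), mul_pos hv0 (by linarith : (0:ℝ) < 1 - v)]
end

section
/- There is no rational function G ∈ ℂ(s) satisfying G(s) − G(s/(2s+1)) = 16 − 16/(s+1)³ + 48/(s+1)² − 48/(s+1). -/
open Polynomial

noncomputable def pstar (n : ℕ) (f : ℂ[X]) : ℂ[X] :=
  ∑ i ∈ Finset.range (n+1), C (f.coeff i) * X ^ i * (2 * X + 1) ^ (n - i)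

lemma pstar_eval (n : ℕ) (f : ℂ[X]) (hf : f.natDegree ≤ n) (s : ℂ) (hs : 2*s+1 ≠ 0) :
    (pstar n f).eval s = (2*s+1)^n * f.eval (s/(2*s+1)) := by
  rw [pstar, eval_finset_sum, Polynomial.eval_eq_sum_range' (Nat.lt_succ_of_le hf), Finset.mul_sum]
  refine Finset.sum_congr rfl fun i hi => ?_
  have hi' : i ≤ n := Nat.lt_succ_iff.mp (Finset.mem_range.mp hi)
  have hpow : (2*s+1)^n = (2*s+1)^(n-i) * (2*s+1)^i := by
    rw [← pow_add, Nat.sub_add_cancel hi']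
  simp only [eval_mul, eval_pow, eval_C, eval_X, eval_add, eval_one, eval_ofNat]
  rw [hpow, div_pow]
  field_simp

/-- There is no rational function G ∈ ℂ(s) satisfying
G(s) − G(s/(2s+1)) = 16 − 16/(s+1)³ + 48/(s+1)² − 48/(s+1)
(stated pointwise on the cofinite set where everything is defined). -/
theorem stmt17 :
    ¬ ∃ (p q : Polynomial ℂ), q ≠ 0 ∧
      ∀ s : ℂ, q.eval s ≠ 0 → q.eval (s / (2 * s + 1)) ≠ 0 → 2 * s + 1 ≠ 0 → s + 1 ≠ 0 →
        p.eval s / q.eval s - p.eval (s / (2 * s + 1)) / q.eval (s / (2 * s + 1))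
          = 16 - 16 / (s + 1) ^ 3 + 48 / (s + 1) ^ 2 - 48 / (s + 1) := by
  rintro ⟨p, q, hq, H⟩
  set g := GCDMonoid.gcd p q with hgdef
  have hg : g ≠ 0 := gcd_ne_zero_of_right hq
  set p₁ := p / g with hp1def
  set q₁ := q / g with hq1def
  have hp : g * p₁ = p := EuclideanDomain.mul_div_cancel' hg (gcd_dvd_left p q)
  have hq' : g * q₁ = q := EuclideanDomain.mul_div_cancel' hg (gcd_dvd_right p q)
  have hcop : IsCoprime p₁ q₁ := isCoprime_div_gcd_div_gcd hq
  have hq₁ : q₁ ≠ 0 := right_div_gcd_ne_zero hq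
  have noroot : ∀ x : ℂ, q₁.eval x = 0 → p₁.eval x ≠ 0 := by
    obtain ⟨a, b, hab⟩ := hcop
    intro x hx hpx
    have := congrArg (eval x) hab
    simp [hx, hpx] at this
  set n := max p₁.natDegree q₁.natDegree with hndef
  set P := pstar n p₁ with hPdef
  set Q := pstar n q₁ with hQdef
  -- the key polynomial identity
  have hQq : pstar q.natDegree q ≠ 0 := by
    obtain ⟨t, ht⟩ := ((q * (C 2 * X - 1)).finite_setOf_isRoot
      (mul_ne_zero hq (by intro h; simpa using congrArg (eval 0) h))).infinite_compl.nonempty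
    simp only [Set.mem_compl_iff, Set.mem_setOf_eq, IsRoot, eval_mul, eval_sub, eval_X, eval_C,
      eval_one, mul_ne_zero_iff] at ht
    obtain ⟨hqt, h2t⟩ := ht
    have h2t' : (1:ℂ) - 2*t ≠ 0 := by intro h; apply h2t; linear_combination -h
    set s := t / (1 - 2*t) with hsdef
    have h2s : 2*s + 1 = 1/(1 - 2*t) := by rw [hsdef]; field_simp; ring
    have h2sne : 2*s + 1 ≠ 0 := by rw [h2s]; exact div_ne_zero one_ne_zero h2t'
    have hphis : s/(2*s+1) = t := by rw [h2s, hsdef]; field_simp; rw [mul_div_assoc, div_self (by rw [mul_comm]; exact h2t'), mul_one]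
    intro h
    have h0 : (0:ℂ[X]).eval s = (2*s+1)^q.natDegree * q.eval t := by
      rw [← h, pstar_eval q.natDegree q le_rfl s h2sne, hphis]
    rw [eval_zero] at h0
    exact (mul_ne_zero (pow_ne_zero _ h2sne) hqt) h0.symm
  have key : (X + 1)^3 * (p₁ * Q - P * q₁) = C 16 * X^3 * (q₁ * Q) := by
    apply Polynomial.eq_of_infinite_eval_eq
    set D := q * pstar q.natDegree q * (2*X+1) * (X+1) with hDdef
    have hD : D ≠ 0 := by
      refine mul_ne_zero (mul_ne_zero (mul_ne_zero hq hQq) ?_) ?_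
      · intro h; simpa using congrArg (eval 0) h
      · intro h; simpa using congrArg (eval 0) h
    apply Set.Infinite.mono (s := {x | ¬ D.IsRoot x})
    · intro s hs
      simp only [Set.mem_setOf_eq, IsRoot, hDdef, eval_mul, eval_add, eval_sub, eval_X, eval_C,
        eval_one, eval_ofNat, mul_ne_zero_iff] at hs
      obtain ⟨⟨⟨hqs, hsts⟩, h2s⟩, h1s⟩ := hs
      have hqφ : q.eval (s/(2*s+1)) ≠ 0 := by
        intro h
        rw [pstar_eval q.natDegree q le_rfl s h2s, h, mul_zero] at hsts
        exact hsts rfl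
      have Hs := H s hqs hqφ h2s h1s
      have hgq : g.eval s * q₁.eval s = q.eval s := by rw [← hq', eval_mul]
      have hgp : g.eval s * p₁.eval s = p.eval s := by rw [← hp, eval_mul]
      have hgq' : g.eval (s/(2*s+1)) * q₁.eval (s/(2*s+1)) = q.eval (s/(2*s+1)) := by
        rw [← hq', eval_mul]
      have hgp' : g.eval (s/(2*s+1)) * p₁.eval (s/(2*s+1)) = p.eval (s/(2*s+1)) := by
        rw [← hp, eval_mul]
      rw [← hgq, ← hgp, ← hgq', ← hgp'] at Hs
      have hgs : g.eval s ≠ 0 := fun h => hqs (by rw [← hgq, h, zero_mul])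
      have hgs' : g.eval (s/(2*s+1)) ≠ 0 := fun h => hqφ (by rw [← hgq', h, zero_mul])
      have hq₁s : q₁.eval s ≠ 0 := fun h => hqs (by rw [← hgq, h, mul_zero])
      have hq₁s' : q₁.eval (s/(2*s+1)) ≠ 0 := fun h => hqφ (by rw [← hgq', h, mul_zero])
      rw [mul_div_mul_left _ _ hgs, mul_div_mul_left _ _ hgs'] at Hs
      simp only [Set.mem_setOf_eq, eval_mul, eval_add, eval_sub, eval_pow, eval_X, eval_C,
        eval_one]
      rw [hPdef, hQdef, pstar_eval n p₁ (le_max_left _ _) s h2s,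
        pstar_eval n q₁ (le_max_right _ _) s h2s]
      have hR : (16:ℂ) - 16/(s+1)^3 + 48/(s+1)^2 - 48/(s+1) = 16*s^3/(s+1)^3 := by
        field_simp
        ring
      rw [hR, div_sub_div _ _ hq₁s hq₁s',
        div_eq_div_iff (mul_ne_zero hq₁s hq₁s') (pow_ne_zero 3 h1s)] at Hs
      linear_combination (2*s+1)^n * Hs
    · apply Set.Finite.infinite_compl
      exact D.finite_setOf_isRoot hD
  -- the orbit points c k = -1/(2k+1)
  set c : ℤ → ℂ := fun k => -1 / (2*(k:ℂ)+1) with hcdef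
  have hodd : ∀ k : ℤ, 2*(k:ℂ)+1 ≠ 0 := by
    intro k h
    have h2 : ((2*k+1 : ℤ) : ℂ) = 0 := by push_cast; linear_combination h
    have h4 : (2*k+1 : ℤ) = 0 := by exact_mod_cast h2
    omega
  have hcinj : Function.Injective c := by
    intro j k hjk
    simp only [hcdef] at hjk
    rw [div_eq_div_iff (hodd j) (hodd k)] at hjk
    have : ((j:ℂ)) = k := by linear_combination (1/2 : ℂ) * hjk
    exact_mod_cast this
  have hsub : ∀ k : ℤ, (2*(k:ℂ)-1) ≠ 0 := by
    intro k h
    apply hodd (k-1)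
    push_cast
    linear_combination h
  have e2 : ∀ k : ℤ, 2 * (c k) + 1 = (2*(k:ℂ)-1) / (2*(k:ℂ)+1) := by
    intro k
    simp only [hcdef]
    field_simp [hodd k]
    ring
  have hck_ne : ∀ k : ℤ, 2 * (c k) + 1 ≠ 0 := by
    intro k
    rw [e2 k]
    exact div_ne_zero (hsub k) (hodd k)
  have hphi : ∀ k : ℤ, (c k) / (2 * (c k) + 1) = c (k - 1) := by
    intro k
    rw [e2 k, div_div_eq_mul_div]
    simp only [hcdef]
    push_cast
    rw [div_mul_cancel₀ (-1 : ℂ) (hodd k)]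
    ring
  -- evaluating the key identity along the orbit
  have keyeval : ∀ k : ℤ, k ≠ 0 →
      (q₁.eval (c k) = 0 ↔ q₁.eval (c (k-1)) = 0) := by
    intro k hk
    have hkC : (k:ℂ) ≠ 0 := Int.cast_ne_zero.2 hk
    have hck1 : c k + 1 ≠ 0 := by
      simp only [hcdef]
      intro h
      apply hkC
      have h2 : (-1 + (2*(k:ℂ)+1)) = 0 := by
        have := congrArg (· * (2*(k:ℂ)+1)) h
        simp only [add_mul, div_mul_cancel₀ _ (hodd k), zero_mul, one_mul] at this
        linear_combination this
      linear_combination h2/2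
    have hck0 : c k ≠ 0 := by
      simp only [hcdef]
      exact div_ne_zero (by norm_num) (hodd k)
    have hev := congrArg (eval (c k)) key
    simp only [eval_mul, eval_pow, eval_add, eval_sub, eval_X, eval_one, eval_C] at hev
    rw [hPdef, hQdef, pstar_eval n p₁ (le_max_left _ _) (c k) (hck_ne k),
      pstar_eval n q₁ (le_max_right _ _) (c k) (hck_ne k), hphi k] at hev
    obtain ⟨x, hx⟩ : ∃ x, x = c k := ⟨_, rfl⟩
    obtain ⟨A, hA⟩ : ∃ A, A = p₁.eval (c k) := ⟨_, rfl⟩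
    obtain ⟨B, hB⟩ : ∃ B, B = q₁.eval (c k) := ⟨_, rfl⟩
    obtain ⟨A', hA'⟩ : ∃ A', A' = p₁.eval (c (k-1)) := ⟨_, rfl⟩
    obtain ⟨B', hB'⟩ : ∃ B', B' = q₁.eval (c (k-1)) := ⟨_, rfl⟩
    rw [← hA, ← hB, ← hA', ← hB', ← hx] at hev
    rw [← hx] at hck1 hck0
    have hwne : (2*x+1) ≠ 0 := by rw [hx]; exact hck_ne k
    have hmain : (x + 1)^3 * (A * B' - A' * B) = 16 * x^3 * (B * B') := by
      apply mul_left_cancel₀ (pow_ne_zero n hwne)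
      linear_combination hev
    rw [← hB, ← hB']
    have hAne : B = 0 → A ≠ 0 := by
      intro hb
      rw [hA]
      exact noroot _ (hB ▸ hb)
    have hA'ne : B' = 0 → A' ≠ 0 := by
      intro hb
      rw [hA']
      exact noroot _ (hB' ▸ hb)
    constructor
    · intro h0
      by_contra h1
      exact (mul_ne_zero (mul_ne_zero (pow_ne_zero 3 hck1) (hAne h0)) h1)
        (by linear_combination hmain + ((x + 1)^3 * A' + 16 * x^3 * B') * h0)
    · intro h0
      by_contra h1
      exact (mul_ne_zero (mul_ne_zero (pow_ne_zero 3 hck1) (hA'ne h0)) h1)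
        (by linear_combination -hmain + ((x + 1)^3 * A - 16 * x^3 * B) * h0)
  -- the base case at s = -1
  have hc0 : c 0 = -1 := by simp [hcdef]
  have hcm1 : c (-1) = 1 := by norm_num [hcdef]
  have hbase : q₁.eval (c 0) = 0 ∨ q₁.eval (c (-1)) = 0 := by
    have hev := congrArg (eval (-1)) key
    simp only [eval_mul, eval_pow, eval_add, eval_sub, eval_X, eval_one, eval_C] at hev
    have h2m1 : 2*(-1:ℂ)+1 ≠ 0 := by norm_num
    rw [hQdef, pstar_eval n q₁ (le_max_right _ _) (-1) h2m1] at hev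
    have hφ : (-1:ℂ)/(2*(-1)+1) = 1 := by norm_num
    rw [hφ] at hev
    have h16 : (16:ℂ) * (-1)^3 * (2*(-1:ℂ)+1)^n ≠ 0 :=
      mul_ne_zero (by norm_num) (pow_ne_zero _ h2m1)
    have hz : q₁.eval (-1) * q₁.eval 1 = 0 := by
      by_contra hnz
      apply mul_ne_zero h16 hnz
      linear_combination -hev
    rw [hc0, hcm1]
    exact mul_eq_zero.mp hz
  have hfin := q₁.finite_setOf_isRoot hq₁
  rcases hbase with h | h
  · have all : ∀ m : ℕ, q₁.eval (c m) = 0 := by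
      intro m
      induction m with
      | zero => simpa using h
      | succ m ih =>
        have hiff := keyeval ((m:ℤ)+1) (by omega)
        have hc' : ((m:ℤ)+1) - 1 = (m:ℤ) := by ring
        rw [hc'] at hiff
        have hidx : ((m+1 : ℕ) : ℤ) = (m:ℤ)+1 := by push_cast; ring
        rw [hidx]
        exact hiff.mpr ih
    have hinj : Function.Injective (fun m : ℕ => c (m:ℤ)) := by
      intro a b hab
      have := hcinj hab
      exact_mod_cast this
    exact (Set.infinite_of_injective_forall_mem hinj (fun m => (all m : q₁.IsRoot (c m)))) hfin
  · have all : ∀ m : ℕ, q₁.eval (c (-1 - m)) = 0 := by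
      intro m
      induction m with
      | zero => simpa using h
      | succ m ih =>
        have hiff := keyeval (-1 - (m:ℤ)) (by omega)
        have hidx : (-1 : ℤ) - ((m+1 : ℕ) : ℤ) = (-1 - (m:ℤ)) - 1 := by push_cast; ring
        rw [hidx]
        exact hiff.mp ih
    have hinj : Function.Injective (fun m : ℕ => c (-1 - (m:ℤ))) := by
      intro a b hab
      have := hcinj hab
      omega
    exact (Set.infinite_of_injective_forall_mem hinj
      (fun m => (all m : q₁.IsRoot (c (-1 - m))))) hfin
end
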